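/- arXiv:2210.12742 — 3 statements merged into one kernel-verified Lean document; each statement's English description precedes it below -/
import Mathlib

section
/- The differential operators T = xy(∂/∂x + ∂/∂y) and G = xy²(∂/∂x + ∂/∂y) + (x²y²/2)(∂²/∂x² + ∂²/∂y²) + x²y² ∂²/∂x∂y commute: for every polynomial f(x,y) in two variables (over ℝ or ℚ), T(G(f)) = G(T(f)). -/
open MvPolynomial

lemma pderiv_comm' {σ : Type*} [DecidableEq σ] (i j : σ) (f : MvPolynomial σ ℚ) :
    pderiv i (pderiv j f) = pderiv j (pderiv i f) := by
  induction f using MvPolynomial.induction_on with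
  | C a => simp
  | add p q hp hq => simp [hp, hq]
  | mul_X p k hp =>
    rcases eq_or_ne k i with rfl | hi
    · rcases eq_or_ne k j with rfl | hj
      · simp [pderiv_mul, hp]
      · simp [pderiv_mul, hp, Pi.single_eq_same, Pi.single_eq_of_ne hj]; ring
    · rcases eq_or_ne k j with rfl | hj
      · simp [pderiv_mul, hp, Pi.single_eq_same, Pi.single_eq_of_ne hi]; ring
      · simp [pderiv_mul, hp, Pi.single_eq_of_ne hi, Pi.single_eq_of_ne hj]

/-- The Eulerian operator `T = xy(∂/∂x + ∂/∂y)`. -/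
noncomputable def Teul (f : MvPolynomial (Fin 2) ℚ) : MvPolynomial (Fin 2) ℚ :=
  X 0 * X 1 * (pderiv (0 : Fin 2) f + pderiv (1 : Fin 2) f)

/-- The Eulerian operator `G = xy²(∂_x+∂_y) + (x²y²/2)(∂_x²+∂_y²) + x²y² ∂_x∂_y`. -/
noncomputable def Gop (f : MvPolynomial (Fin 2) ℚ) : MvPolynomial (Fin 2) ℚ :=
  X 0 * X 1 ^ 2 * (pderiv (0 : Fin 2) f + pderiv (1 : Fin 2) f)
    + C (1 / 2 : ℚ) * (X 0 ^ 2 * X 1 ^ 2) *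
        (pderiv (0 : Fin 2) (pderiv (0 : Fin 2) f) + pderiv (1 : Fin 2) (pderiv (1 : Fin 2) f))
    + X 0 ^ 2 * X 1 ^ 2 * pderiv (0 : Fin 2) (pderiv (1 : Fin 2) f)

/-- The Eulerian operators `T` and `G` commute. -/
theorem T_G_commute (f : MvPolynomial (Fin 2) ℚ) : Teul (Gop f) = Gop (Teul f) := by
  unfold Teul Gop
  simp only [map_add, pderiv_mul, pderiv_X_self, pderiv_X_of_ne (by decide : (1:Fin 2) ≠ 0),
    pderiv_X_of_ne (by decide : (0:Fin 2) ≠ 1), pderiv_C, pderiv_pow, pderiv_C_mul,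
    map_mul]
  rw [pderiv_comm' 0 1 f, pderiv_comm' 0 1 (pderiv 1 f)]
  rw [show (pderiv (1 : Fin 2)) ((pderiv (0 : Fin 2)) ((pderiv (1 : Fin 2)) f))
      = (pderiv (1 : Fin 2)) ((pderiv (1 : Fin 2)) ((pderiv (0 : Fin 2)) f)) by
    rw [pderiv_comm' 0 1 f]]
  rw [pderiv_comm' 0 1 (pderiv 0 f)]
  have h : (C (1/2 : ℚ) : MvPolynomial (Fin 2) ℚ) * 2 = 1 := by
    rw [show (2 : MvPolynomial (Fin 2) ℚ) = C 2 from (map_ofNat C 2).symm, ← C_mul]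
    norm_num
  simp only [pderiv_one, map_zero, pderiv_C]
  linear_combination (- X 0 ^ 2 * X 1 ^ 3 * pderiv 1 (pderiv 0 f)
    - X 0 ^ 3 * X 1 ^ 2 * pderiv 1 (pderiv 0 f)
    + X 0 ^ 2 * X 1 ^ 3 * pderiv 1 (pderiv 1 f)
    + X 0 ^ 3 * X 1 ^ 2 * pderiv 0 (pderiv 0 f)) * h
end

section
/- Every polynomial f(x) of degree n admits a unique decomposition f(x) = a(x) + x·b(x) where a(x) is symmetric of degree n (i.e., x^n a(1/x) = a(x)) and b(x) is symmetric of degree n-1; explicitly a(x) = (f(x) - x^{n+1}f(1/x))/(1-x) and b(x) = (x^n f(1/x) - f(x))/(1-x). -/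
open Polynomial

private lemma reflect_reflect' (N : ℕ) (p : Polynomial ℚ) :
    reflect N (reflect N p) = p := by
  ext i
  simp [coeff_reflect]

private lemma natDegree_reflect_le' {N : ℕ} {p : Polynomial ℚ} (h : p.natDegree ≤ N) :
    (reflect N p).natDegree ≤ N := by
  rw [natDegree_le_iff_coeff_eq_zero]
  intro m hm
  rw [coeff_reflect, revAt_eq_self_of_lt hm]
  exact coeff_eq_zero_of_natDegree_lt (lt_of_le_of_lt h hm)

private lemma eval_one_reflect' {N : ℕ} {p : Polynomial ℚ} (h : p.natDegree ≤ N) :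
    (reflect N p).eval 1 = p.eval 1 := by
  letI : Invertible (1 : ℚ) := invertibleOne
  have h2 := eval₂_reflect_mul_pow (RingHom.id ℚ) (1 : ℚ) N p h
  simp only [invOf_one, one_pow, mul_one] at h2
  simpa only [eval] using h2

/-- Every polynomial `f` of degree `n` has a unique symmetric decomposition
`f = a + X·b` with `a` symmetric of degree `n` and `b` symmetric of degree `n-1`;
the pair is given explicitly by `(1-X)a = f - X·(Xⁿf(1/X))` and
`(1-X)b = Xⁿf(1/X) - f`, where `Xⁿf(1/X)` is the reflection `reflect n f`. -/
theorem symmetric_decomposition (n : ℕ) (f : Polynomial ℚ) (hf : f.natDegree = n) :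
    ∃! ab : Polynomial ℚ × Polynomial ℚ,
      ab.1.natDegree ≤ n ∧ reflect n ab.1 = ab.1 ∧
      ab.2.natDegree ≤ n - 1 ∧ reflect (n - 1) ab.2 = ab.2 ∧
      f = ab.1 + X * ab.2 ∧
      (1 - X) * ab.1 = f - X * reflect n f ∧
      (1 - X) * ab.2 = reflect n f - f := by
  have hfn : f.natDegree ≤ n := hf.le
  have hrn : (reflect n f).natDegree ≤ n := natDegree_reflect_le' hfn
  have h10 : (1 - X : Polynomial ℚ) ≠ 0 := fun h => by
    simpa using congrArg (eval 0) h
  have hXC : (X - C (1:ℚ) : Polynomial ℚ) ≠ 0 := X_sub_C_ne_zero 1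
  have hnd1 : (1 - X : Polynomial ℚ).natDegree = 1 := by
    have : (1 - X : Polynomial ℚ) = -(X - C 1) := by rw [map_one]; ring
    rw [this, natDegree_neg, natDegree_X_sub_C]
  -- roots at 1
  have root_a : IsRoot (f - X * reflect n f) 1 := by
    simp [IsRoot, eval_one_reflect' hfn]
  have root_b : IsRoot (reflect n f - f) 1 := by
    simp [IsRoot, eval_one_reflect' hfn]
  set a : Polynomial ℚ := -((f - X * reflect n f) /ₘ (X - C 1)) with ha_def
  set b : Polynomial ℚ := -((reflect n f - f) /ₘ (X - C 1)) with hb_def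
  have ha : (1 - X) * a = f - X * reflect n f := by
    have h := mul_divByMonic_eq_iff_isRoot.mpr root_a
    calc (1 - X) * a = (X - C 1) * ((f - X * reflect n f) /ₘ (X - C 1)) := by
          rw [ha_def, map_one]; ring
      _ = _ := h
  have hb : (1 - X) * b = reflect n f - f := by
    have h := mul_divByMonic_eq_iff_isRoot.mpr root_b
    calc (1 - X) * b = (X - C 1) * ((reflect n f - f) /ₘ (X - C 1)) := by
          rw [hb_def, map_one]; ring
      _ = _ := h
  -- f = a + X * b
  have hsum : f = a + X * b := by
    apply mul_left_cancel₀ h10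
    rw [mul_add, ha, ← mul_assoc, mul_comm (1 - X : Polynomial ℚ) X, mul_assoc, hb]
    ring
  -- degree bounds
  have hdeg_rhs_a : (f - X * reflect n f).natDegree ≤ n + 1 := by
    apply le_trans (natDegree_sub_le _ _)
    simp only [max_le_iff]
    constructor
    · omega
    · apply le_trans (natDegree_mul_le)
      simp only [natDegree_X]
      omega
  have hdeg_rhs_b : (reflect n f - f).natDegree ≤ n := by
    apply le_trans (natDegree_sub_le _ _)
    simp [hrn, hfn]
  have hdeg_a : a.natDegree ≤ n := by
    by_cases h0 : a = 0
    · simp [h0]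
    · have := natDegree_mul h10 h0
      rw [ha, hnd1] at this
      omega
  have hdeg_b : b.natDegree ≤ n - 1 := by
    by_cases h0 : b = 0
    · simp [h0]
    · have := natDegree_mul h10 h0
      rw [hb, hnd1] at this
      omega
  -- reflect (1 - X) = X - 1
  have hrefl1 : reflect 1 ((1 : Polynomial ℚ) - X) = X - 1 := by
    rw [reflect_sub, reflect_one, reflect_one_X, pow_one]
  -- symmetry of a
  have hsym_a : reflect n a = a := by
    apply mul_left_cancel₀ hXC
    have key : reflect (1 + n) ((1 - X) * a) = reflect 1 ((1:Polynomial ℚ) - X) * reflect n a :=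
      reflect_mul _ _ (by rw [hnd1]) hdeg_a
    have lhs : reflect (1 + n) ((1 - X) * a) = X * reflect n f - f := by
      rw [ha, reflect_sub]
      have h1 : reflect (1 + n) f = X * reflect n f := by
        have := reflect_mul (1 : Polynomial ℚ) f (F := 1) (G := n) (by simp) hfn
        simpa [reflect_one, pow_one] using this
      have h2 : reflect (1 + n) (X * reflect n f) = f := by
        have := reflect_mul (X : Polynomial ℚ) (reflect n f) (F := 1) (G := n)
          (by simp) hrn
        rw [this, reflect_one_X, one_mul, reflect_reflect']
      rw [h1, h2]
    rw [hrefl1, lhs] at key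
    have : (X - 1 : Polynomial ℚ) * a = X * reflect n f - f := by
      rw [show (X - 1 : Polynomial ℚ) * a = -((1 - X) * a) by ring, ha]; ring
    rw [map_one, ← key]
    exact this.symm
  -- symmetry of b
  have hsym_b : reflect (n - 1) b = b := by
    rcases n with _ | m
    · -- n = 0 : b = 0
      have hf0 : reflect 0 f = f := by
        have hc : f = C (f.coeff 0) := eq_C_of_natDegree_eq_zero hf
        rw [hc, reflect_C]
        simp
      have hb0 : b = 0 := by
        have : (1 - X) * b = 0 := by rw [hb, hf0, sub_self]
        rcases mul_eq_zero.mp this with h | h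
        · exact absurd h h10
        · exact h
      simp [hb0]
    · -- n = m + 1
      simp only [Nat.add_sub_cancel]
      apply mul_left_cancel₀ hXC
      have key : reflect (1 + m) ((1 - X) * b) = reflect 1 ((1:Polynomial ℚ) - X) * reflect m b :=
        reflect_mul _ _ (by rw [hnd1]) (by simpa using hdeg_b)
      have lhs : reflect (1 + m) ((1 - X) * b) = f - reflect (m + 1) f := by
        rw [hb, reflect_sub]
        have hmm : 1 + m = m + 1 := by omega
        rw [hmm, reflect_reflect']
      rw [hrefl1, lhs] at key
      have : (X - 1 : Polynomial ℚ) * b = f - reflect (m + 1) f := by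
        rw [show (X - 1 : Polynomial ℚ) * b = -((1 - X) * b) by ring, hb]
        ring
      rw [map_one, ← key]
      exact this.symm
  refine ⟨(a, b), ⟨hdeg_a, hsym_a, hdeg_b, hsym_b, hsum, ha, hb⟩, ?_⟩
  rintro ⟨a', b'⟩ ⟨-, -, -, -, -, ha', hb'⟩
  have e1 : a' = a := mul_left_cancel₀ h10 (ha'.trans ha.symm)
  have e2 : b' = b := mul_left_cancel₀ h10 (hb'.trans hb.symm)
  simp [e1, e2]
end

section
/- A polynomial f(x) = Σ_{i=0}^n f_i x^i with nonnegative coefficients is alternatingly increasing (i.e., f_0 ≤ f_n ≤ f_1 ≤ f_{n-1} ≤ ... ≤ f_{⌊(n+1)/2⌋}) if both polynomials a(x) and b(x) in its symmetric decomposition f = a + x·b are unimodal with nonnegative coefficients. -/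
/-!
Comparing coefficients in `(1 - X) a = f - X·reflect n f` and `(1 - X) b = reflect n f - f` gives
`a_{k+1} - a_k = f_{k+1} - f_{n-k}` and `b_{k+1} - b_k = f_{n-1-k} - f_{k+1}`,
with `b_0 = f_n - f_0`.
So the alternating inequalities say exactly that `a` and `b` weakly increase up to their middle.
Reflecting these equations shows that `a` and `b` are palindromic of degrees `n` and `n - 1`, and a
palindromic unimodal polynomial `c` of degree `m` does increase up to its middle: if the mode
lies left of `j + 1 ≤ m - j`, then `c_j = c_{m-j} ≤ c_{j+1}`.
-/

open Polynomial

/-- A polynomial is unimodal if its coefficient sequence weakly increases up to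
some index `k` and weakly decreases afterwards. -/
def Unimodal (p : Polynomial ℝ) : Prop :=
  ∃ k : ℕ, (∀ i j : ℕ, i ≤ j → j ≤ k → p.coeff i ≤ p.coeff j) ∧
    (∀ i j : ℕ, k ≤ i → i ≤ j → p.coeff j ≤ p.coeff i)

/-- A polynomial of degree `n` is alternatingly increasing if
`f₀ ≤ fₙ ≤ f₁ ≤ f_{n-1} ≤ ⋯ ≤ f_{⌊(n+1)/2⌋}`. -/
def AlternatinglyIncreasing (n : ℕ) (f : Polynomial ℝ) : Prop :=
  (∀ i : ℕ, i ≤ n - i → f.coeff i ≤ f.coeff (n - i)) ∧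
  (∀ i : ℕ, i + 1 ≤ n - i → f.coeff (n - i) ≤ f.coeff (i + 1))

namespace Polynomial

variable {R : Type*}

lemma reflect_succ_eq_X_mul_reflect [Semiring R] {N : ℕ} {f : R[X]} (hf : f.natDegree ≤ N) :
    reflect (N + 1) f = X * reflect N f := by
  simpa [X_mul] using reflect_mul f 1 hf (natDegree_one.trans_le zero_le_one)

lemma coeff_one_sub_X_mul_zero [Ring R] (p : R[X]) : ((1 - X) * p).coeff 0 = p.coeff 0 := by
  simp [sub_mul]

lemma coeff_one_sub_X_mul_succ [Ring R] (p : R[X]) (k : ℕ) :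
    ((1 - X) * p).coeff (k + 1) = p.coeff (k + 1) - p.coeff k := by
  simp [sub_mul, coeff_X_mul]

lemma reflect_eq_self_of_one_sub_X_mul_eq [CommRing R] [Nontrivial R] {N : ℕ} {p q : R[X]}
    (hq : q.natDegree ≤ N + 1) (h : (1 - X) * p = q - reflect (N + 1) q) :
    reflect N p = p := by
  rcases eq_or_ne p 0 with rfl | hp0
  · exact reflect_zero
  have hmonic : (X - 1 : R[X]).Monic := by simpa using monic_X_sub_C (1 : R)
  have hdeg : (X - 1 : R[X]).natDegree = 1 := by simpa using natDegree_X_sub_C (1 : R)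
  have hXp : (X - 1) * p = reflect (N + 1) q - q := by linear_combination -h
  have hp : p.natDegree ≤ N := by
    have hle : ((X - 1) * p).natDegree ≤ N + 1 := by
      rw [hXp]
      exact (natDegree_sub_le_of_le (natDegree_reflect_le.trans (max_le le_rfl hq)) hq).trans
        (max_self _).le
    rw [hmonic.natDegree_mul' hp0, hdeg] at hle
    omega
  refine hmonic.isRegular.left ?_
  calc (X - 1) * reflect N p = reflect (1 + N) ((1 - X) * p) := by
        rw [reflect_mul _ _ ((natDegree_sub_le _ _).trans (by simp)) hp]
        simp [reflect_sub, reflect_one]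
    _ = (X - 1) * p := by rw [h, add_comm, reflect_sub, reflect_reflect, hXp]

end Polynomial

lemma Unimodal.coeff_le_coeff_succ_of_reflect_eq {c : ℝ[X]} {m j : ℕ} (hU : Unimodal c)
    (hsym : reflect m c = c) (hj : 2 * j + 1 ≤ m) : c.coeff j ≤ c.coeff (j + 1) := by
  obtain ⟨k, hinc, hdec⟩ := hU
  by_cases hk : j + 1 ≤ k
  · exact hinc j (j + 1) j.le_succ hk
  · have hmirror : c.coeff (m - j) = c.coeff j := by
      simpa [coeff_reflect, revAt_le (show j ≤ m by omega)] using congrArg (coeff · j) hsym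
    rw [← hmirror]
    exact hdec (j + 1) (m - j) (by omega) (by omega)

theorem alternatingly_increasing_of_unimodal_decomposition_general (n : ℕ) (f a b : Polynomial ℝ)
    (hf : f.natDegree = n)
    (ha : (1 - X) * a = f - X * reflect n f)
    (hb : (1 - X) * b = reflect n f - f)
    (haU : Unimodal a)
    (hbU : Unimodal b) (hbPos : ∀ i, 0 ≤ b.coeff i) :
    AlternatinglyIncreasing n f := by
  obtain _ | n := n
  · exact ⟨fun i hi => by rw [show i = 0 by omega], fun i hi => by omega⟩
  have hrefl : ∀ k ≤ n + 1, (reflect (n + 1) f).coeff k = f.coeff (n + 1 - k) :=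
    fun k hk => by rw [coeff_reflect, revAt_le hk]
  have hsymA : reflect (n + 1) a = a :=
    reflect_eq_self_of_one_sub_X_mul_eq (q := f) (by omega)
      (by rw [ha, reflect_succ_eq_X_mul_reflect hf.le])
  have hsymB : reflect n b = b :=
    reflect_eq_self_of_one_sub_X_mul_eq (natDegree_reflect_le.trans (by rw [hf, max_self]))
      (by rw [hb, reflect_reflect])
  have hdiffA :
      ∀ k ≤ n, a.coeff (k + 1) - a.coeff k = f.coeff (k + 1) - f.coeff (n + 1 - k) := by
    intro k hk
    simpa [coeff_one_sub_X_mul_succ, coeff_X_mul, hrefl k (by omega)]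
      using congrArg (coeff · (k + 1)) ha
  have hdiffB : ∀ k ≤ n, b.coeff (k + 1) - b.coeff k = f.coeff (n - k) - f.coeff (k + 1) := by
    intro k hk
    simpa [coeff_one_sub_X_mul_succ, hrefl (k + 1) (by omega)]
      using congrArg (coeff · (k + 1)) hb
  have hb0 : b.coeff 0 = f.coeff (n + 1) - f.coeff 0 := by
    simpa [coeff_one_sub_X_mul_zero, hrefl 0 (by omega)] using congrArg (coeff · 0) hb
  refine ⟨?_, fun i hi => ?_⟩
  · rintro (_ | j) hj
    · rw [Nat.sub_zero]
      linarith [hbPos 0]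
    · rw [Nat.add_sub_add_right]
      linarith [hdiffB j (by omega),
        hbU.coeff_le_coeff_succ_of_reflect_eq hsymB (j := j) (by omega)]
  · linarith [hdiffA i (by omega),
      haU.coeff_le_coeff_succ_of_reflect_eq hsymA (j := i) (by omega)]

/-- If both parts of the symmetric decomposition `f = a + X·b` are unimodal with
nonnegative coefficients, then `f` is alternatingly increasing. -/
theorem alternatingly_increasing_of_unimodal_decomposition (n : ℕ) (f a b : Polynomial ℝ)
    (hf : f.natDegree = n) (hcoeff : ∀ i, 0 ≤ f.coeff i)
    (ha : (1 - X) * a = f - X * reflect n f)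
    (hb : (1 - X) * b = reflect n f - f)
    (haU : Unimodal a) (haPos : ∀ i, 0 ≤ a.coeff i)
    (hbU : Unimodal b) (hbPos : ∀ i, 0 ≤ b.coeff i) :
    AlternatinglyIncreasing n f :=
  alternatingly_increasing_of_unimodal_decomposition_general n f a b hf ha hb haU hbU hbPos
end
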